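/- Let ξ ∈ ℝ, α ∈ ℝ, and c > 0 with 6|α|c < 1, and define G: ℝ → ℝ by G(x) = x + α(x−ξ)|x−ξ| φ((x−ξ)/c). Then G is continuously differentiable with G'(x) ≥ 1 − 6|α|c > 0 for all x ∈ ℝ, G is strictly increasing, and G is a bijection from ℝ onto ℝ. -/

import Mathlib

/-- The bump function `φ(u) = (1+u)³(1-u)³` for `|u| ≤ 1` and `φ(u) = 0` otherwise. -/
noncomputable def phi (u : ℝ) : ℝ := if |u| ≤ 1 then (1 + u) ^ 3 * (1 - u) ^ 3 else 0

/-- The transform `G(x) = x + α(x-ξ)|x-ξ| φ((x-ξ)/c)`. -/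
noncomputable def transformG (ξ α c : ℝ) (x : ℝ) : ℝ :=
  x + α * ((x - ξ) * |x - ξ| * phi ((x - ξ) / c))

/-!
With `u = (x - ξ)/c` and `ψ(u) = u|u|φ(u)` one has `G(x) = x + αc²ψ(u)`. Since
`φ(u) = max(1 - u², 0)³`, the function `ψ` is `C¹` with `ψ'(u) = 2|u|m²(m - 3u²)`,
`m = max(1 - u², 0)`; hence `|ψ'| ≤ 6` and `G' = 1 + αcψ'(u) ≥ 1 - 6|α|c > 0`.
Moreover `|ψ| ≤ 1`, so `G` stays within `|α|c²` of the identity, and a continuous map at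
bounded distance from the identity is onto.
-/

open Filter Asymptotics

lemma hasDerivAt_zero_of_abs_le_pow {f : ℝ → ℝ} {n : ℕ} (hn : 1 < n)
    (hf : ∀ x, |f x| ≤ |x| ^ n) : HasDerivAt f 0 0 := by
  have hf0 : f 0 = 0 := abs_nonpos_iff.mp (by simpa [zero_pow (by omega : n ≠ 0)] using hf 0)
  rw [hasDerivAt_iff_isLittleO_nhds_zero]
  simp only [zero_add, hf0, sub_zero, smul_zero]
  refine (IsBigO.of_bound 1 (Eventually.of_forall fun x => ?_)).trans_isLittleO
    (isLittleO_pow_id hn)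
  simpa [abs_pow] using hf x

lemma hasDerivAt_mul_abs (x : ℝ) : HasDerivAt (fun y : ℝ => y * |y|) (2 * |x|) x := by
  rcases lt_trichotomy x 0 with hx | rfl | hx
  · have h := ((hasDerivAt_id x).mul (hasDerivAt_id x)).neg
    refine (h.congr_deriv (by simp [abs_of_neg hx]; ring)).congr_of_eventuallyEq ?_
    filter_upwards [Iio_mem_nhds hx] with y (hy : y < 0)
    simp [abs_of_neg hy]
  · simpa using hasDerivAt_zero_of_abs_le_pow one_lt_two fun y => by simp [abs_mul, sq]
  · have h := (hasDerivAt_id x).mul (hasDerivAt_id x)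
    refine (h.congr_deriv (by simp [abs_of_pos hx]; ring)).congr_of_eventuallyEq ?_
    filter_upwards [Ioi_mem_nhds hx] with y (hy : 0 < y)
    simp [abs_of_pos hy]

lemma hasDerivAt_max_zero_pow (n : ℕ) (t : ℝ) :
    HasDerivAt (fun s : ℝ => max s 0 ^ (n + 2)) ((n + 2) * max t 0 ^ (n + 1)) t := by
  rcases lt_trichotomy t 0 with ht | rfl | ht
  · refine (hasDerivAt_const t (0 : ℝ)).congr_deriv (by simp [ht.le]) |>.congr_of_eventuallyEq ?_
    filter_upwards [Iio_mem_nhds ht] with s (hs : s < 0)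
    simp [hs.le]
  · simpa using hasDerivAt_zero_of_abs_le_pow (by omega : 1 < n + 2) fun s => by
      rw [abs_pow]
      refine pow_le_pow_left₀ (abs_nonneg _) ?_ _
      rcases le_total s 0 with hs | hs
      · simp [max_eq_right hs]
      · simp [max_eq_left hs]
  · refine (hasDerivAt_pow (n + 2) t).congr_deriv (by simp [ht.le]) |>.congr_of_eventuallyEq ?_
    filter_upwards [Ioi_mem_nhds ht] with s (hs : 0 < s)
    simp [hs.le]

lemma surjective_of_continuous_of_abs_sub_le {f : ℝ → ℝ} (hf : Continuous f) (C : ℝ)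
    (hC : ∀ x, |f x - x| ≤ C) : Function.Surjective f := by
  refine hf.surjective ?_ ?_
  · refine tendsto_atTop_mono (fun x => ?_) (tendsto_atTop_add_const_right _ (-C) tendsto_id)
    linarith [id_eq x, (abs_le.mp (hC x)).1]
  · refine tendsto_atBot_mono (fun x => ?_) (tendsto_atBot_add_const_right _ C tendsto_id)
    linarith [id_eq x, (abs_le.mp (hC x)).2]

lemma phi_eq_max_pow (u : ℝ) : phi u = max (1 - u ^ 2) 0 ^ 3 := by
  unfold phi
  split_ifs with h
  · rw [max_eq_left (by nlinarith [abs_le.mp h])]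
    ring
  · rw [max_eq_right (by nlinarith [sq_abs u, not_le.mp h])]
    simp

lemma hasDerivAt_phi (u : ℝ) : HasDerivAt phi (-6 * u * max (1 - u ^ 2) 0 ^ 2) u := by
  rw [show phi = fun u => max (1 - u ^ 2) 0 ^ 3 from funext phi_eq_max_pow]
  exact ((hasDerivAt_max_zero_pow 1 _).comp u ((hasDerivAt_pow 2 u).const_sub 1)).congr_deriv
    (by push_cast; ring)

noncomputable def psi (u : ℝ) : ℝ := u * |u| * phi u

noncomputable def psiDeriv (u : ℝ) : ℝ :=
  2 * |u| * max (1 - u ^ 2) 0 ^ 2 * (max (1 - u ^ 2) 0 - 3 * u ^ 2)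

lemma hasDerivAt_psi (u : ℝ) : HasDerivAt psi (psiDeriv u) u :=
  ((hasDerivAt_mul_abs u).mul (hasDerivAt_phi u)).congr_deriv <| by
    rw [phi_eq_max_pow, psiDeriv]
    ring

lemma continuous_psiDeriv : Continuous psiDeriv := by
  unfold psiDeriv
  fun_prop

lemma abs_psi_le_one (u : ℝ) : |psi u| ≤ 1 := by
  rw [psi, phi_eq_max_pow]
  rcases le_total (1 - u ^ 2) 0 with h | h
  · simp [max_eq_right h]
  · have hu : u ^ 2 ≤ 1 := by linarith
    calc |u * |u| * max (1 - u ^ 2) 0 ^ 3| = u ^ 2 * (1 - u ^ 2) ^ 3 := by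
          rw [max_eq_left h, abs_mul, abs_mul, abs_abs, abs_of_nonneg (pow_nonneg h 3), ← sq,
            sq_abs]
      _ ≤ 1 := mul_le_one₀ hu (pow_nonneg h 3) (pow_le_one₀ h (by linarith [sq_nonneg u]))

lemma abs_psiDeriv_le (u : ℝ) : |psiDeriv u| ≤ 6 := by
  rw [psiDeriv]
  rcases le_total (1 - u ^ 2) 0 with h | h
  · simp [max_eq_right h]
  · have hu : |u| ≤ 1 := by rw [← sq_le_one_iff_abs_le_one]; linarith
    have hm : (1 - u ^ 2) ^ 2 ≤ 1 := pow_le_one₀ h (by linarith [sq_nonneg u])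
    rw [max_eq_left h, abs_mul, abs_of_nonneg (by positivity : 0 ≤ 2 * |u| * (1 - u ^ 2) ^ 2)]
    calc 2 * |u| * (1 - u ^ 2) ^ 2 * |1 - u ^ 2 - 3 * u ^ 2| ≤ 2 * 1 * 1 * 3 := by
          gcongr
          rw [abs_le]
          constructor <;> linarith [sq_nonneg u]
      _ = 6 := by norm_num

lemma transformG_eq_add_psi (ξ α : ℝ) {c : ℝ} (hc : 0 < c) (x : ℝ) :
    transformG ξ α c x = x + α * c ^ 2 * psi ((x - ξ) / c) := by
  rw [transformG]
  set u := (x - ξ) / c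
  have hx : x - ξ = c * u := (mul_div_cancel₀ _ hc.ne').symm
  rw [psi, hx, abs_mul, abs_of_pos hc]
  ring

lemma hasDerivAt_transformG (ξ α : ℝ) {c : ℝ} (hc : 0 < c) (x : ℝ) :
    HasDerivAt (transformG ξ α c) (1 + α * c * psiDeriv ((x - ξ) / c)) x := by
  rw [show transformG ξ α c = _ from funext (transformG_eq_add_psi ξ α hc)]
  have hu := ((hasDerivAt_id x).sub_const ξ).div_const c
  exact ((hasDerivAt_id x).add (((hasDerivAt_psi _).comp x hu).const_mul (α * c ^ 2))).congr_deriv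
    (by simp only [id_eq]; generalize psiDeriv ((x - ξ) / c) = d; field_simp)

lemma deriv_transformG (ξ α : ℝ) {c : ℝ} (hc : 0 < c) :
    deriv (transformG ξ α c) = fun x => 1 + α * c * psiDeriv ((x - ξ) / c) :=
  funext fun x => (hasDerivAt_transformG ξ α hc x).deriv

lemma one_sub_le_deriv_transformG (ξ α : ℝ) {c : ℝ} (hc : 0 < c) (x : ℝ) :
    1 - 6 * |α| * c ≤ deriv (transformG ξ α c) x := by
  set d := psiDeriv ((x - ξ) / c)
  calc 1 - 6 * |α| * c = 1 - |α| * c * 6 := by ring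
    _ ≤ 1 - |α * c * d| := by
        rw [abs_mul, abs_mul, abs_of_pos hc]
        gcongr
        exact abs_psiDeriv_le _
    _ ≤ 1 + α * c * d := by linarith [neg_abs_le (α * c * d)]
    _ = deriv (transformG ξ α c) x := by rw [deriv_transformG ξ α hc]

lemma abs_transformG_sub_le (ξ α : ℝ) {c : ℝ} (hc : 0 < c) (x : ℝ) :
    |transformG ξ α c x - x| ≤ |α| * c ^ 2 := by
  rw [transformG_eq_add_psi ξ α hc, add_sub_cancel_left, abs_mul, abs_mul,
    abs_of_pos (pow_pos hc 2)]
  exact mul_le_of_le_one_right (by positivity) (abs_psi_le_one _)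

/-- if `6|α|c < 1` then `G` is `C¹` with `G'(x) ≥ 1 - 6|α|c > 0`,
strictly increasing, and a bijection of `ℝ` onto itself. -/
theorem transformG_bijective (ξ α c : ℝ) (hc : 0 < c) (h : 6 * |α| * c < 1) :
    ContDiff ℝ 1 (transformG ξ α c) ∧
    (∀ x : ℝ, 1 - 6 * |α| * c ≤ deriv (transformG ξ α c) x) ∧
    0 < 1 - 6 * |α| * c ∧
    StrictMono (transformG ξ α c) ∧
    Function.Bijective (transformG ξ α c) := by
  have hC1 : ContDiff ℝ 1 (transformG ξ α c) := by
    rw [contDiff_one_iff_deriv, deriv_transformG ξ α hc]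
    exact ⟨fun x => (hasDerivAt_transformG ξ α hc x).differentiableAt,
      continuous_const.add (continuous_const.mul (continuous_psiDeriv.comp (by fun_prop)))⟩
  have hmono : StrictMono (transformG ξ α c) :=
    strictMono_of_deriv_pos fun x => by linarith [one_sub_le_deriv_transformG ξ α hc x]
  exact ⟨hC1, one_sub_le_deriv_transformG ξ α hc, by linarith, hmono, hmono.injective,
    surjective_of_continuous_of_abs_sub_le hC1.continuous _ (abs_transformG_sub_le ξ α hc)⟩
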